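/- Let β, γ, x, q⁺, q⁻ be real numbers. Let L(x) be the symmetric 2×2 matrix with entries L₀₀ = β³ + 2βx + γx², L₀₁ = L₁₀ = β² + x(1 + βγ) + γ²x², and L₁₁ = β + 2γx + γ³x². For s ∈ {+,−}, let q^s denote the column vector (1 − q^s, q^s)ᵀ, and define f_{ss'}(x) := (q^s)ᵀ L(x) q^{s'}. Then f_{+−}(x)·f_{−+}(x) − f_{++}(x)·f_{−−}(x) = (1 − βγ)³ · x² · (q⁺ − q⁻)². -/
import Mathlib


open Matrix

/-- The interaction matrix `L(x)` of a 3-edge path whose two internal vertices carry vertex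
activity `x`. -/
noncomputable def pathMatrix (β γ x : ℝ) : Matrix (Fin 2) (Fin 2) ℝ :=
  !![β ^ 3 + 2 * β * x + γ * x ^ 2, β ^ 2 + x * (1 + β * γ) + γ ^ 2 * x ^ 2;
     β ^ 2 + x * (1 + β * γ) + γ ^ 2 * x ^ 2, β + 2 * γ * x + γ ^ 3 * x ^ 2]

/-- The column vector `(1 − q, q)ᵀ`. -/
def qVec (q : ℝ) : Fin 2 → ℝ := ![1 - q, q]

/-- `f_{ss'}(x) := (q^s)ᵀ L(x) q^{s'}`. -/
noncomputable def fPath (β γ x q q' : ℝ) : ℝ :=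
  qVec q ⬝ᵥ (pathMatrix β γ x).mulVec (qVec q')

/-- For all reals `β, γ, x, q⁺, q⁻`,
`f_{+−}(x)·f_{−+}(x) − f_{++}(x)·f_{−−}(x) = (1 − βγ)³·x²·(q⁺ − q⁻)²`. -/
theorem path_gram_identity (β γ x qp qm : ℝ) :
    fPath β γ x qp qm * fPath β γ x qm qp - fPath β γ x qp qp * fPath β γ x qm qm =
      (1 - β * γ) ^ 3 * x ^ 2 * (qp - qm) ^ 2 := by
  simp only [fPath, pathMatrix, qVec, Matrix.mulVec, dotProduct, Fin.sum_univ_two,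
    Matrix.of_apply, Matrix.cons_val', Matrix.cons_val_zero, Matrix.cons_val_one,
    Matrix.head_cons, Matrix.head_fin_const, Matrix.empty_val', Matrix.cons_val_fin_one]
  ring
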